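/- For every integer n ≥ 1 and every z ∈ ℂ ∖ [−1,1], ∫_{−1}^{1} P_n(t) · log|z − t| dt = (2/(2n+1)) · Re(Q_{n+1}(z) − Q_{n−1}(z)), where Q_m(z) = (1/2) ∫_{−1}^{1} P_m(s)/(z − s) ds is the Legendre function of the second kind given by Neumann's integral formula. -/

import Mathlib

open MeasureTheory Set Filter Finset Complex Topology

noncomputable section

/-- The Legendre polynomial Pₙ via Rodrigues' formula. -/
def legendreP (n : ℕ) : Polynomial ℝ :=
  ((1 : ℝ) / (2 ^ n * n.factorial)) • Polynomial.derivative^[n] ((Polynomial.X ^ 2 - 1) ^ n)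

/-- The Legendre function of the second kind via Neumann's integral formula. -/
def legendreQ (n : ℕ) (z : ℂ) : ℂ :=
  (1 / 2) * ∫ s in (-1:ℝ)..1, (((legendreP n).eval s : ℝ) : ℂ) / (z - s)

/-!
Put `F = P_{n+1} - P_{n-1}`. Rodrigues' formula gives `F' = (2n+1) P_n`, and `F(±1) = 0` because
`P_m(±1) = (±1)^m`. Since `d/dt log|z - t| = -Re (z - t)⁻¹`, integrating by parts turns
`∫ P_n(t) log|z - t| dt` into `(2n+1)⁻¹ ∫ F(t) Re (z - t)⁻¹ dt`, which is the real part of Neumann's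
integral for `2 (Q_{n+1} - Q_{n-1}) / (2n+1)`.
-/

open Polynomial

theorem hasDerivAt_log_norm_sub_ofReal {z : ℂ} {t : ℝ} (h : z ≠ t) :
    HasDerivAt (fun s : ℝ ↦ Real.log ‖z - s‖) (-(z - t)⁻¹.re) t := by
  have hsq : HasDerivAt (fun s : ℝ ↦ ‖z - s‖ ^ 2) (2 * inner ℝ (z - t) (-1 : ℂ)) t :=
    ((hasDerivAt_id t).ofReal_comp.const_sub z).norm_sq
  have hlog := (hsq.log (by simpa [sub_eq_zero] using h)).div_const 2
  have hfun : (fun s : ℝ ↦ Real.log ‖z - s‖) = fun s : ℝ ↦ Real.log (‖z - s‖ ^ 2) / 2 := by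
    ext s
    rw [Real.log_pow]
    push_cast
    ring
  rw [hfun]
  refine hlog.congr_deriv ?_
  rw [Complex.inv_re, Complex.normSq_eq_norm_sq]
  simp only [inner_neg_right, Complex.inner, map_sub, conj_ofReal, one_mul, sub_re, conj_re,
    ofReal_re, neg_sub]
  field_simp
  ring

theorem continuousOn_inv_sub_ofReal {z : ℂ} {s : Set ℝ} (hz : ∀ t ∈ s, z ≠ t) :
    ContinuousOn (fun t : ℝ ↦ (z - t)⁻¹) s :=
  (continuous_const.sub continuous_ofReal).continuousOn.inv₀ fun t ht ↦ sub_ne_zero.mpr (hz t ht)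

theorem integral_mul_log_norm_sub_eq_integral_mul_inv_re {F f : ℝ → ℝ} {a b : ℝ} {z : ℂ}
    (hz : ∀ t ∈ Set.uIcc a b, z ≠ t) (hF : ∀ t ∈ Set.uIcc a b, HasDerivAt F (f t) t)
    (hf : IntervalIntegrable f volume a b) (ha : F a = 0) (hb : F b = 0) :
    ∫ t in a..b, f t * Real.log ‖z - t‖ = ∫ t in a..b, F t * (z - t)⁻¹.re := by
  have hK : IntervalIntegrable (fun t ↦ -(z - t)⁻¹.re) volume a b :=
    (continuous_re.comp_continuousOn (continuousOn_inv_sub_ofReal hz)).neg.intervalIntegrable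
  have parts := intervalIntegral.integral_mul_deriv_eq_deriv_mul
    (fun t ht ↦ hasDerivAt_log_norm_sub_ofReal (hz t ht)) hF hK hf
  simp only [ha, hb, mul_zero, sub_zero, zero_sub, neg_mul, neg_neg,
    intervalIntegral.integral_neg] at parts
  simpa only [mul_comm] using parts

theorem re_intervalIntegral_ofReal_div_sub {f : ℝ → ℝ} {a b : ℝ} {z : ℂ}
    (hz : ∀ t ∈ Set.uIcc a b, z ≠ t) (hf : ContinuousOn f (Set.uIcc a b)) :
    (∫ t in a..b, (f t : ℂ) / (z - t)).re = ∫ t in a..b, f t * (z - t)⁻¹.re := by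
  have hint : IntervalIntegrable (fun t ↦ (f t : ℂ) / (z - t)) volume a b :=
    ((continuous_ofReal.comp_continuousOn hf).mul (continuousOn_inv_sub_ofReal hz)).intervalIntegrable
  calc (∫ t in a..b, (f t : ℂ) / (z - t)).re = ∫ t in a..b, ((f t : ℂ) / (z - t)).re :=
        (intervalIntegral.intervalIntegral_re hint).symm
    _ = ∫ t in a..b, f t * (z - t)⁻¹.re := by simp only [div_eq_mul_inv, re_ofReal_mul]

section Rodrigues

variable {R : Type*} [CommRing R]

theorem derivative_X_sq_sub_one_pow_succ (n : ℕ) :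
    derivative (((X : R[X]) ^ 2 - 1) ^ (n + 1)) = 2 * ((n : R[X]) + 1) * X * (X ^ 2 - 1) ^ n := by
  rw [derivative_pow]
  simp only [Nat.cast_add, Nat.cast_one, map_add, map_natCast, map_one, add_tsub_cancel_right,
    derivative_sub, derivative_X_pow_succ, pow_one, derivative_one, sub_zero]
  ring

-- The second derivative contains `X² (X² - 1)ⁿ = (X² - 1)ⁿ⁺¹ + (X² - 1)ⁿ`.
theorem derivative_derivative_X_sq_sub_one_pow (n : ℕ) :
    derivative (derivative (((X : R[X]) ^ 2 - 1) ^ (n + 2))) =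
      C (2 * ((n : R) + 2) * (2 * n + 3)) * (X ^ 2 - 1) ^ (n + 1) +
        C (4 * ((n : R) + 1) * (n + 2)) * (X ^ 2 - 1) ^ n := by
  rw [derivative_X_sq_sub_one_pow_succ, derivative_mul, derivative_X_sq_sub_one_pow_succ]
  simp only [map_mul, map_add, map_natCast, map_ofNat, map_one, derivative_mul,
    derivative_ofNat, derivative_one, derivative_natCast, derivative_X, Nat.cast_add, Nat.cast_one]
  ring

theorem iterate_derivative_X_sq_sub_one_pow (n : ℕ) :
    derivative^[n + 3] (((X : R[X]) ^ 2 - 1) ^ (n + 2)) =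
      C (2 * ((n : R) + 2) * (2 * n + 3)) * derivative^[n + 1] ((X ^ 2 - 1) ^ (n + 1)) +
        C (4 * ((n : R) + 1) * (n + 2)) * derivative^[n + 1] ((X ^ 2 - 1) ^ n) := by
  rw [Function.iterate_succ_apply, Function.iterate_succ_apply,
    derivative_derivative_X_sq_sub_one_pow, iterate_map_add, iterate_derivative_C_mul,
    iterate_derivative_C_mul]

theorem eval_iterate_derivative_X_sub_C_pow_mul (a : R) (n : ℕ) (q : R[X]) :
    (derivative^[n] ((X - C a) ^ n * q)).eval a = n.factorial * q.eval a := by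
  rw [iterate_derivative_mul, eval_finsetSum, sum_eq_single_of_mem 0 (by simp)]
  · simp [iterate_derivative_X_sub_pow_self]
  · intro k hk hk0
    rw [iterate_derivative_X_sub_pow, eval_smul, eval_mul, eval_smul, eval_pow,
      Nat.sub_sub_self (mem_range_succ_iff.mp hk), eval_sub, eval_X, eval_C, sub_self,
      zero_pow hk0, smul_zero, zero_mul, smul_zero]

end Rodrigues

theorem derivative_legendreP_add_two (n : ℕ) :
    derivative (legendreP (n + 2)) =
      derivative (legendreP n) + C (2 * n + 3 : ℝ) * legendreP (n + 1) := by
  have e1 : 1 / (2 ^ (n + 2) * ((n + 2).factorial : ℝ)) * (2 * (n + 2) * (2 * n + 3)) =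
      (2 * n + 3) * (1 / (2 ^ (n + 1) * (n + 1).factorial)) := by
    push_cast [pow_succ, Nat.factorial_succ]; field_simp; ring
  have e2 : 1 / (2 ^ (n + 2) * ((n + 2).factorial : ℝ)) * (4 * (n + 1) * (n + 2)) =
      1 / (2 ^ n * n.factorial) := by
    push_cast [pow_succ, Nat.factorial_succ]; field_simp; ring
  rw [legendreP, legendreP, legendreP, derivative_smul, derivative_smul,
    ← Function.iterate_succ_apply' derivative, ← Function.iterate_succ_apply' derivative,
    iterate_derivative_X_sq_sub_one_pow, smul_eq_C_mul, smul_eq_C_mul, smul_eq_C_mul,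
    mul_add, ← mul_assoc, ← mul_assoc, ← C_mul, ← C_mul, e1, e2, C_mul, mul_assoc, add_comm]

theorem legendreP_eval_one (n : ℕ) : (legendreP n).eval 1 = 1 := by
  have h : (X ^ 2 - 1 : ℝ[X]) ^ n = (X - C 1) ^ n * (X + 1) ^ n := by
    rw [map_one, ← mul_pow]; ring
  rw [legendreP, eval_smul, h, eval_iterate_derivative_X_sub_C_pow_mul]
  simp only [one_div, mul_inv_rev, eval_pow, eval_add, eval_X, eval_one, smul_eq_mul]
  field_simp
  norm_num

theorem legendreP_eval_neg_one (n : ℕ) : (legendreP n).eval (-1) = (-1) ^ n := by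
  have h : (X ^ 2 - 1 : ℝ[X]) ^ n = (X - C (-1)) ^ n * (X - 1) ^ n := by
    rw [map_neg, map_one, sub_neg_eq_add, ← mul_pow]; ring
  rw [legendreP, eval_smul, h, eval_iterate_derivative_X_sub_C_pow_mul]
  simp only [one_div, mul_inv_rev, eval_pow, eval_sub, eval_X, eval_one, smul_eq_mul]
  field_simp
  rw [← mul_pow]
  norm_num

theorem re_legendreQ (n : ℕ) {z : ℂ} (hz : ∀ t ∈ Set.uIcc (-1 : ℝ) 1, z ≠ t) :
    (legendreQ n z).re = 1 / 2 * ∫ t in (-1 : ℝ)..1, (legendreP n).eval t * (z - t)⁻¹.re := by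
  rw [legendreQ, ← re_intervalIntegral_ofReal_div_sub hz (legendreP n).continuous.continuousOn]
  norm_num

/-- logarithmic moments of Legendre polynomials via Legendre Q functions. -/
theorem legendre_log_moment (n : ℕ) (hn : 1 ≤ n) (z : ℂ)
    (hz : ∀ t : ℝ, t ∈ Set.Icc (-1:ℝ) 1 → z ≠ (t : ℂ)) :
    ∫ t in (-1:ℝ)..1, (legendreP n).eval t * Real.log ‖z - t‖
      = (2 / (2 * n + 1)) * (legendreQ (n + 1) z - legendreQ (n - 1) z).re := by
  obtain ⟨m, rfl⟩ := Nat.exists_eq_add_of_le' hn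
  rw [Nat.add_sub_cancel, show m + 1 + 1 = m + 2 from rfl]
  rw [← Set.uIcc_of_le (by norm_num : (-1 : ℝ) ≤ 1)] at hz
  set F := legendreP (m + 2) - legendreP m
  have hF : ∀ t, HasDerivAt (fun t ↦ F.eval t) ((2 * m + 3) * (legendreP (m + 1)).eval t) t := by
    intro t
    simpa [F, derivative_legendreP_add_two] using F.hasDerivAt t
  have hKint : ∀ p : ℝ[X], IntervalIntegrable (fun t ↦ p.eval t * (z - t)⁻¹.re) volume (-1) 1 :=
    fun p ↦ (p.continuous.continuousOn.mul (continuous_re.comp_continuousOn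
      (continuousOn_inv_sub_ofReal hz))).intervalIntegrable
  have hparts := integral_mul_log_norm_sub_eq_integral_mul_inv_re hz (fun t _ ↦ hF t)
    (((legendreP (m + 1)).continuous.const_mul _).intervalIntegrable _ _)
    (by simp [F, legendreP_eval_neg_one, pow_add]) (by simp [F, legendreP_eval_one])
  simp only [mul_assoc, intervalIntegral.integral_const_mul, F, eval_sub, sub_mul,
    intervalIntegral.integral_sub (hKint _) (hKint _)] at hparts
  rw [sub_re, re_legendreQ _ hz, re_legendreQ _ hz, ← mul_sub, ← hparts]
  push_cast
  field_simp
  ring
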